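/- In the two-dimensional yarmulke Morse geometry, write Z = √(ζ−1) and let q = (a,0) with 0 < a < ε. Then the chronological past of q is the open heart-shaped region bounded by the two past-directed null spirals from q: I⁻(q) = {p ∈ N : |p| < a e^{−|φ_p|/Z}}, where φ_p ∈ (−π, π] is the angle of p (i.e. p = |p|(cos φ_p, sin φ_p)). -/

import Mathlib

/-!
Identify the plane with `ℂ`. For a curve `z(t)` the timelike and future-pointing conditions say
exactly that the logarithmic derivative `z'/z` lies in the open cone `|Im w| < Z Re w`,
`Z = √(ζ - 1)`. Integrating `z'/z`, `p ≪ q` holds iff `q = p exp w` for some `w` in that cone;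
conversely `t ↦ p exp (t w)` is such a curve. For `q = a > 0` this says `a = |p| e^{Re w}` and
`Im w ≡ -arg p (mod 2π)`; the smallest admissible `|Im w|` is `|arg p|`, whence
`|p| < a e^{-|arg p|/Z}`.
-/

noncomputable section

open Set

/-- The punctured disc `N = {p : 0 < |p| < ε}` (Euclidean norm). -/
def NY (ε : ℝ) : Set (ℝ × ℝ) :=
  {p | 0 < p.1 ^ 2 + p.2 ^ 2 ∧ p.1 ^ 2 + p.2 ^ 2 < ε ^ 2}

/-- Euclidean dot product on ℝ². -/
def dot2 (a b : ℝ × ℝ) : ℝ := a.1 * b.1 + a.2 * b.2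

/-- Planar cross product `p × w = p₁w₂ − p₂w₁`. -/
def cross2 (a b : ℝ × ℝ) : ℝ := a.1 * b.2 - a.2 * b.1

/-- The yarmulke Morse metric (quadratic form) built from `f(p) = |p|²`:
`g_p(w,w) = 4|p|²|w|² − 4ζ(p·w)²`. -/
def gY (ζ : ℝ) (p w : ℝ × ℝ) : ℝ :=
  4 * dot2 p p * dot2 w w - 4 * ζ * dot2 p w ^ 2

/-- A future-directed timelike curve: a C¹ curve in `N` with everywhere timelike
tangent satisfying the future-pointing condition `γ(t)·γ'(t) > 0`. -/
def TimelikeY (ζ ε : ℝ) (γ γ' : ℝ → ℝ × ℝ) : Prop :=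
  (∀ t ∈ Icc (0 : ℝ) 1, HasDerivAt γ (γ' t) t) ∧
  ContinuousOn γ' (Icc (0 : ℝ) 1) ∧
  (∀ t ∈ Icc (0 : ℝ) 1, γ t ∈ NY ε) ∧
  (∀ t ∈ Icc (0 : ℝ) 1, gY ζ (γ t) (γ' t) < 0) ∧
  (∀ t ∈ Icc (0 : ℝ) 1, 0 < dot2 (γ t) (γ' t))

/-- The chronology relation `q ≪ p`. -/
def chronY (ζ ε : ℝ) (q p : ℝ × ℝ) : Prop :=
  ∃ γ γ', TimelikeY ζ ε γ γ' ∧ γ 0 = q ∧ γ 1 = p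

def IplusY (ζ ε : ℝ) (q : ℝ × ℝ) : Set (ℝ × ℝ) := {p ∈ NY ε | chronY ζ ε q p}

def IminusY (ζ ε : ℝ) (q : ℝ × ℝ) : Set (ℝ × ℝ) := {p ∈ NY ε | chronY ζ ε p q}

/-- The angle `φ_p ∈ (−π, π]` of a point of the plane. -/
def ang (p : ℝ × ℝ) : ℝ := Complex.arg ((p.1 : ℂ) + (p.2 : ℂ) * Complex.I)

open Complex

abbrev toComplex : (ℝ × ℝ) ≃L[ℝ] ℂ := equivRealProdCLM.symm

lemma toComplex_apply (p : ℝ × ℝ) : toComplex p = p.1 + p.2 * I :=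
  equivRealProdCLM_symm_apply p

@[simp] lemma toComplex_re (p : ℝ × ℝ) : (toComplex p).re = p.1 := by simp [toComplex_apply]

@[simp] lemma toComplex_im (p : ℝ × ℝ) : (toComplex p).im = p.2 := by simp [toComplex_apply]

lemma ang_eq_arg (p : ℝ × ℝ) : ang p = arg (toComplex p) := by rw [ang, toComplex_apply]

lemma sq_add_sq_eq_norm_sq (p : ℝ × ℝ) : p.1 ^ 2 + p.2 ^ 2 = ‖toComplex p‖ ^ 2 := by
  rw [← normSq_eq_norm_sq, normSq_apply, toComplex_re, toComplex_im]; ring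

lemma sqrt_sq_add_sq_eq_norm (p : ℝ × ℝ) : √(p.1 ^ 2 + p.2 ^ 2) = ‖toComplex p‖ := by
  rw [sq_add_sq_eq_norm_sq, Real.sqrt_sq (norm_nonneg _)]

lemma toComplex_ne_zero_of_mem_NY {ε : ℝ} {p : ℝ × ℝ} (hp : p ∈ NY ε) : toComplex p ≠ 0 := by
  intro h
  have := hp.1
  rw [sq_add_sq_eq_norm_sq, h, norm_zero] at this
  norm_num at this

lemma mem_NY_of_norm_le {ε : ℝ} {p q : ℝ × ℝ} (hq : q ∈ NY ε) (hp : toComplex p ≠ 0)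
    (hpq : ‖toComplex p‖ ≤ ‖toComplex q‖) : p ∈ NY ε := by
  have hq := hq.2
  rw [sq_add_sq_eq_norm_sq] at hq
  refine ⟨?_, ?_⟩ <;> rw [sq_add_sq_eq_norm_sq]
  · exact pow_pos (norm_pos_iff.2 hp) 2
  · exact lt_of_le_of_lt (pow_le_pow_left₀ (norm_nonneg _) hpq 2) hq

lemma gY_eq (ζ : ℝ) (p w : ℝ × ℝ) :
    gY ζ p w = 4 * (cross2 p w ^ 2 - (ζ - 1) * dot2 p w ^ 2) := by
  simp only [gY, dot2, cross2]; ring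

lemma toComplex_div_re (p w : ℝ × ℝ) :
    (toComplex w / toComplex p).re = dot2 p w / ‖toComplex p‖ ^ 2 := by
  rw [div_re, normSq_eq_norm_sq, dot2]; simp only [toComplex_re, toComplex_im]; ring

lemma toComplex_div_im (p w : ℝ × ℝ) :
    (toComplex w / toComplex p).im = cross2 p w / ‖toComplex p‖ ^ 2 := by
  rw [div_im, normSq_eq_norm_sq, cross2]; simp only [toComplex_re, toComplex_im]; ring

lemma gY_neg_and_dot2_pos_iff {ζ : ℝ} (hζ : 1 < ζ) {p : ℝ × ℝ} (hp : toComplex p ≠ 0)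
    (w : ℝ × ℝ) :
    gY ζ p w < 0 ∧ 0 < dot2 p w ↔
      |(toComplex w / toComplex p).im| < √(ζ - 1) * (toComplex w / toComplex p).re := by
  have hn : 0 < ‖toComplex p‖ ^ 2 := by positivity
  have hZ : 0 < √(ζ - 1) := Real.sqrt_pos.2 (sub_pos.2 hζ)
  have hZ2 : √(ζ - 1) ^ 2 = ζ - 1 := Real.sq_sqrt (sub_pos.2 hζ).le
  rw [toComplex_div_re, toComplex_div_im, abs_div, abs_of_pos hn, mul_div_assoc',
    div_lt_div_iff_of_pos_right hn, gY_eq]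
  generalize √(ζ - 1) = Z at hZ hZ2 ⊢
  rw [← hZ2]
  constructor
  · rintro ⟨hg, hd⟩
    exact abs_lt_of_sq_lt_sq (by nlinarith) (by positivity)
  · intro h
    have hd : 0 < dot2 p w := pos_of_mul_pos_right ((abs_nonneg _).trans_lt h) hZ.le
    have := sq_lt_sq' (neg_lt_of_abs_lt h) (lt_of_abs_lt h)
    exact ⟨by nlinarith, hd⟩

lemma abs_im_lt_mul_re_iff (Z : ℝ) (w : ℂ) :
    |w.im| < Z * w.re ↔ 0 < ((Z + I) * w).re ∧ 0 < ((Z - I) * w).re := by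
  simp only [mul_re, add_re, add_im, sub_re, sub_im, ofReal_re, ofReal_im, I_re, I_im, abs_lt]
  constructor <;> rintro ⟨h₁, h₂⟩ <;> constructor <;> linarith

lemma exists_forall_hasDerivAt_of_continuousOn_Icc {E : Type*} [NormedAddCommGroup E]
    [NormedSpace ℝ E] [CompleteSpace E] {f : ℝ → E} {a b : ℝ} (hab : a ≤ b)
    (hf : ContinuousOn f (Icc a b)) : ∃ F : ℝ → E, ∀ t ∈ Icc a b, HasDerivAt F (f t) t := by
  set g := IccExtend hab ((Icc a b).domRestrict f)
  have hg : Continuous g := Continuous.Icc_extend' hf.domRestrict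
  refine ⟨fun t => ∫ s in a..t, g s, fun t ht => ?_⟩
  have := (hg.integral_hasStrictDerivAt a t).hasDerivAt
  rwa [show g t = f t from IccExtend_of_mem hab _ ht] at this

lemma eq_mul_exp_sub_of_hasDerivAt {z z' L : ℝ → ℂ} {a b : ℝ} (hab : a ≤ b)
    (hz : ∀ t ∈ Icc a b, HasDerivAt z (z' t) t) (hz₀ : ∀ t ∈ Icc a b, z t ≠ 0)
    (hL : ∀ t ∈ Icc a b, HasDerivAt L (z' t / z t) t) :
    z b = z a * exp (L b - L a) := by
  have hF : ∀ t ∈ Icc a b, HasDerivAt (fun s => z s * exp (-L s)) 0 t := fun t ht => by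
    refine ((hz t ht).mul (hL t ht).neg.cexp).congr_deriv ?_
    field_simp [hz₀ t ht]
    ring
  have hconst := constant_of_has_deriv_right_zero
    (fun t ht => (hF t ht).continuousAt.continuousWithinAt)
    (fun t ht => (hF t (Ico_subset_Icc_self ht)).hasDerivWithinAt) b (right_mem_Icc.2 hab)
  rw [sub_eq_neg_add, exp_add, ← mul_assoc, ← hconst, mul_assoc, ← exp_add]
  simp

lemma re_lt_re_of_hasDerivAt {L f : ℝ → ℂ} {a b : ℝ} (hab : a < b)
    (hL : ∀ t ∈ Icc a b, HasDerivAt L (f t) t) (hf : ∀ t ∈ Ioo a b, 0 < (f t).re) :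
    (L a).re < (L b).re := by
  have hre : ∀ t ∈ Icc a b, HasDerivAt (fun s => (L s).re) (f t).re t := fun t ht =>
    reCLM.hasFDerivAt.comp_hasDerivAt t (hL t ht)
  refine strictMonoOn_of_deriv_pos (convex_Icc a b)
    (fun t ht => (hre t ht).continuousAt.continuousWithinAt) (fun t ht => ?_)
    (left_mem_Icc.2 hab.le) (right_mem_Icc.2 hab.le) hab
  rw [interior_Icc] at ht
  rw [(hre t (Ioo_subset_Icc_self ht)).deriv]
  exact hf t ht

lemma abs_im_sub_lt_of_hasDerivAt {L f : ℝ → ℂ} {a b Z : ℝ} (hab : a < b)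
    (hL : ∀ t ∈ Icc a b, HasDerivAt L (f t) t) (hf : ∀ t ∈ Ioo a b, |(f t).im| < Z * (f t).re) :
    |(L b - L a).im| < Z * (L b - L a).re := by
  have key (κ : ℂ) (hκ : ∀ t ∈ Ioo a b, 0 < (κ * f t).re) : 0 < (κ * (L b - L a)).re := by
    have := re_lt_re_of_hasDerivAt hab (fun t ht => (hL t ht).const_mul κ) hκ
    rw [mul_sub, sub_re]
    linarith
  rw [abs_im_lt_mul_re_iff]
  exact ⟨key _ fun t ht => ((abs_im_lt_mul_re_iff _ _).1 (hf t ht)).1,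
    key _ fun t ht => ((abs_im_lt_mul_re_iff _ _).1 (hf t ht)).2⟩

lemma abs_arg_exp_le (u : ℂ) : |arg (exp u)| ≤ |u.im| := by
  rw [arg_exp, ← Real.Angle.toReal_coe]
  by_cases h : u.im ∈ Ioc (-Real.pi) Real.pi
  · rw [Real.Angle.toReal_coe_eq_self_iff_mem_Ioc.2 h]
  · refine (Real.Angle.abs_toReal_le_pi _).trans ?_
    rw [mem_Ioc, not_and_or, not_lt, not_le] at h
    rcases h with h | h <;> cases abs_cases u.im <;> linarith [Real.pi_pos]

theorem exists_mul_exp_eq_ofReal_iff {Z a : ℝ} (hZ : 0 < Z) (ha : 0 < a) {z : ℂ} (hz : z ≠ 0) :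
    (∃ w : ℂ, |w.im| < Z * w.re ∧ z * exp w = a) ↔ ‖z‖ < a * Real.exp (-|arg z| / Z) := by
  have hzn : 0 < ‖z‖ := norm_pos_iff.2 hz
  constructor
  · rintro ⟨w, hw, hzw⟩
    have hz' : z = a * exp (-w) := by rw [← hzw, mul_assoc, ← exp_add]; simp
    have hnorm : ‖z‖ = a * Real.exp (-w.re) := by
      rw [hz', norm_mul, norm_exp, norm_real, Real.norm_of_nonneg ha.le, neg_re]
    have harg : |arg z| ≤ |w.im| := by
      rw [hz', arg_real_mul _ ha]
      simpa using abs_arg_exp_le (-w)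
    rw [hnorm]
    gcongr
    rw [neg_div, neg_lt_neg_iff, div_lt_iff₀ hZ, mul_comm]
    exact harg.trans_lt hw
  · intro h
    set c := Real.log a - Real.log ‖z‖
    refine ⟨c - arg z * I, ?_, ?_⟩
    · have hlog := Real.log_lt_log hzn h
      rw [Real.log_mul ha.ne' (Real.exp_pos _).ne', Real.log_exp, neg_div] at hlog
      have him : ((c : ℂ) - arg z * I).im = -arg z := by simp
      have hre : ((c : ℂ) - arg z * I).re = c := by simp
      rw [him, hre, abs_neg, ← div_lt_iff₀' hZ]
      linarith
    · nth_rewrite 1 [← norm_mul_exp_arg_mul_I z]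
      rw [mul_assoc, ← exp_add, add_sub_cancel, ← ofReal_exp, Real.exp_sub, Real.exp_log ha,
        Real.exp_log hzn]
      push_cast
      exact mul_div_cancel₀ _ (ofReal_ne_zero.2 hzn.ne')

section Chronology

variable {ζ ε : ℝ}

theorem exists_mul_exp_of_timelikeY (hζ : 1 < ζ) {γ γ' : ℝ → ℝ × ℝ} (hγ : TimelikeY ζ ε γ γ') :
    ∃ w : ℂ, |w.im| < √(ζ - 1) * w.re ∧ toComplex (γ 0) * exp w = toComplex (γ 1) := by
  obtain ⟨hd, hcont, hN, hg, hdot⟩ := hγ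
  set z := fun t => toComplex (γ t)
  set z' := fun t => toComplex (γ' t)
  have hz : ∀ t ∈ Icc (0 : ℝ) 1, HasDerivAt z (z' t) t := fun t ht =>
    toComplex.hasFDerivAt.comp_hasDerivAt t (hd t ht)
  have hz₀ : ∀ t ∈ Icc (0 : ℝ) 1, z t ≠ 0 := fun t ht => toComplex_ne_zero_of_mem_NY (hN t ht)
  have hcone : ∀ t ∈ Icc (0 : ℝ) 1, |(z' t / z t).im| < √(ζ - 1) * (z' t / z t).re :=
    fun t ht => (gY_neg_and_dot2_pos_iff hζ (hz₀ t ht) _).1 ⟨hg t ht, hdot t ht⟩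
  have hcont' : ContinuousOn (fun t => z' t / z t) (Icc 0 1) :=
    (toComplex.continuous.comp_continuousOn hcont).div
      (fun t ht => (hz t ht).continuousAt.continuousWithinAt) hz₀
  obtain ⟨L, hL⟩ := exists_forall_hasDerivAt_of_continuousOn_Icc zero_le_one hcont'
  exact ⟨L 1 - L 0, abs_im_sub_lt_of_hasDerivAt zero_lt_one hL
    (fun t ht => hcone t (Ioo_subset_Icc_self ht)),
    (eq_mul_exp_sub_of_hasDerivAt zero_le_one hz hz₀ hL).symm⟩

theorem chronY_of_mul_exp_eq (hζ : 1 < ζ) {p q : ℝ × ℝ} (hp : toComplex p ≠ 0) (hq : q ∈ NY ε)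
    {w : ℂ} (hw : |w.im| < √(ζ - 1) * w.re) (hpq : toComplex p * exp w = toComplex q) :
    chronY ζ ε p q := by
  have hw₀ : 0 < w.re :=
    pos_of_mul_pos_right ((abs_nonneg _).trans_lt hw) (Real.sqrt_nonneg _)
  set c : ℝ → ℂ := fun s => toComplex p * exp (s * w)
  have hc : ∀ s, HasDerivAt c (c s * w) s := fun s => by
    have := ((hasDerivAt_id s).ofReal_comp.mul_const w).cexp.const_mul (toComplex p)
    simpa [c, mul_assoc] using this
  have hc₀ : ∀ s, toComplex (toComplex.symm (c s)) ≠ 0 := fun s => by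
    rw [ContinuousLinearEquiv.apply_symm_apply]
    exact mul_ne_zero hp (exp_ne_zero _)
  have hratio : ∀ s, toComplex (toComplex.symm (c s * w)) / toComplex (toComplex.symm (c s)) = w :=
    fun s => by
      rw [ContinuousLinearEquiv.apply_symm_apply, ContinuousLinearEquiv.apply_symm_apply,
        mul_div_cancel_left₀ _ (mul_ne_zero hp (exp_ne_zero _))]
  have htimelike : ∀ s, gY ζ (toComplex.symm (c s)) (toComplex.symm (c s * w)) < 0 ∧
      0 < dot2 (toComplex.symm (c s)) (toComplex.symm (c s * w)) := fun s =>
    (gY_neg_and_dot2_pos_iff hζ (hc₀ s) _).2 (by rwa [hratio])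
  refine ⟨fun s => toComplex.symm (c s), fun s => toComplex.symm (c s * w),
    ⟨fun s _ => toComplex.symm.hasFDerivAt.comp_hasDerivAt s (hc s), by fun_prop,
      fun s hs => mem_NY_of_norm_le hq (hc₀ s) ?_, fun s _ => (htimelike s).1,
      fun s _ => (htimelike s).2⟩, ?_, ?_⟩
  · rw [ContinuousLinearEquiv.apply_symm_apply, ← hpq, norm_mul, norm_mul, norm_exp, norm_exp,
      re_ofReal_mul]
    gcongr
    exact mul_le_of_le_one_left hw₀.le hs.2
  · simp only [c, ofReal_zero, zero_mul, exp_zero, mul_one, ContinuousLinearEquiv.symm_apply_apply]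
  · simp only [c, ofReal_one, one_mul, hpq, ContinuousLinearEquiv.symm_apply_apply]

theorem chronY_iff (hζ : 1 < ζ) {p q : ℝ × ℝ} (hp : p ∈ NY ε) (hq : q ∈ NY ε) :
    chronY ζ ε p q ↔ ∃ w : ℂ, |w.im| < √(ζ - 1) * w.re ∧ toComplex p * exp w = toComplex q := by
  constructor
  · rintro ⟨γ, γ', hγ, rfl, rfl⟩
    exact exists_mul_exp_of_timelikeY hζ hγ
  · rintro ⟨w, hw, hpq⟩
    exact chronY_of_mul_exp_eq hζ (toComplex_ne_zero_of_mem_NY hp) hq hw hpq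

end Chronology

theorem stmt7_general (ζ ε a : ℝ) (hζ : 1 < ζ) (ha : 0 < a) (haε : a < ε) :
    IminusY ζ ε (a, 0) =
      {p ∈ NY ε |
        Real.sqrt (p.1 ^ 2 + p.2 ^ 2) < a * Real.exp (-|ang p| / Real.sqrt (ζ - 1))} := by
  have hq : ((a, 0) : ℝ × ℝ) ∈ NY ε := ⟨by dsimp only; positivity, by dsimp only; nlinarith⟩
  have hqa : toComplex (a, 0) = a := by simp [toComplex_apply]
  rw [IminusY, sep_ext_iff]
  intro p hp
  rw [chronY_iff hζ hp hq, sqrt_sq_add_sq_eq_norm, ang_eq_arg, hqa]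
  exact exists_mul_exp_eq_ofReal_iff (Real.sqrt_pos.2 (sub_pos.2 hζ)) ha
    (toComplex_ne_zero_of_mem_NY hp)

/-- in the yarmulke, the chronological past of `q = (a,0)` (`0 < a < ε`)
is the open heart-shaped region bounded by the two past-directed null spirals:
`I⁻(q) = {p ∈ N : |p| < a e^{−|φ_p|/Z}}` with `Z = √(ζ−1)`. -/
theorem stmt7 (ζ ε a : ℝ) (hζ : 1 < ζ) (hε : 0 < ε) (ha : 0 < a) (haε : a < ε) :
    IminusY ζ ε (a, 0) =
      {p ∈ NY ε |
        Real.sqrt (p.1 ^ 2 + p.2 ^ 2) < a * Real.exp (-|ang p| / Real.sqrt (ζ - 1))} :=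
  stmt7_general ζ ε a hζ ha haε
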